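/- arXiv:2510.12975 — 3 statements merged into one kernel-verified Lean document; each statement's English description precedes it below -/
import Mathlib

section
/- Hyvärinen's implicit score matching decomposition: let Y be an ℝⁿ-valued random vector whose law has a continuously differentiable strictly positive density p with finite Fisher information J(p) := ∫ ‖∇p‖²/p, and let v : ℝⁿ → ℝⁿ be a continuously differentiable compactly supported vector field. Then E[div v(Y) + ½‖v(Y)‖²] = ½·E‖v(Y) − ∇log p(Y)‖² − ½·J(p). In particular, E[div v(Y) + ½‖v(Y)‖²] ≥ −½·J(p), with the lower bound corresponding to v = ∇log p. -/
open MeasureTheory ProbabilityTheory Real Filter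
open scoped ENNReal NNReal Topology

noncomputable section

/-- Divergence of a vector field on `ℝⁿ` (trace of the Jacobian). -/
def vdiv {n : ℕ} (v : EuclideanSpace ℝ (Fin n) → EuclideanSpace ℝ (Fin n))
    (x : EuclideanSpace ℝ (Fin n)) : ℝ :=
  ∑ i, fderiv ℝ v x (EuclideanSpace.single i 1) i

/-- Fisher information `J(q) := ∫ ‖∇q(y)‖²/q(y) dy` of a density `q` on `ℝⁿ`. -/
def fisherInfo {n : ℕ} (q : EuclideanSpace ℝ (Fin n) → ℝ) : ℝ :=
  ∫ y, ‖gradient q y‖ ^ 2 / q y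

section Aux

open Metric

variable {n : ℕ}

/-- Integration by parts: `∫ (div v) p = -∫ dp(v)` for `C¹` `p` and compactly supported `C¹` `v`. -/
theorem hyv_ibp (p : EuclideanSpace ℝ (Fin n) → ℝ) (hp : ContDiff ℝ 1 p)
    (v : EuclideanSpace ℝ (Fin n) → EuclideanSpace ℝ (Fin n))
    (hv : ContDiff ℝ 1 v) (hv_supp : HasCompactSupport v) :
    ∫ y, vdiv v y * p y = - ∫ y, fderiv ℝ p y (v y) := by
  obtain ⟨R, hR0, hRsub⟩ : ∃ R : ℝ, 0 < R ∧ tsupport v ⊆ ball (0 : EuclideanSpace ℝ (Fin n)) R := by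
    obtain ⟨R, hR⟩ := hv_supp.isBounded.subset_ball (0 : EuclideanSpace ℝ (Fin n))
    exact ⟨max R 1, lt_of_lt_of_le one_pos (le_max_right _ _),
      hR.trans (ball_subset_ball (le_max_left _ _))⟩
  set b : ContDiffBump (0 : EuclideanSpace ℝ (Fin n)) := ⟨R, 2 * R, hR0, by linarith⟩ with hb
  set f : EuclideanSpace ℝ (Fin n) → ℝ := fun x => b x * p x with hf
  have hf_diff : ContDiff ℝ 1 f := (b.contDiff).mul hp
  have hf_supp : HasCompactSupport f := b.hasCompactSupport.mul_right
  obtain ⟨C, hC⟩ := ContDiff.lipschitzWith_of_hasCompactSupport hf_supp hf_diff one_ne_zero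
  have hfp : ∀ x ∈ ball (0 : EuclideanSpace ℝ (Fin n)) R, f x = p x := by
    intro x hx
    simp [hf, b.one_of_mem_closedBall (ball_subset_closedBall hx)]
  have hfd : ∀ x ∈ ball (0 : EuclideanSpace ℝ (Fin n)) R, fderiv ℝ f x = fderiv ℝ p x := by
    intro x hx
    apply Filter.EventuallyEq.fderiv_eq
    filter_upwards [isOpen_ball.mem_nhds hx] with z hz using hfp z hz
  set g : Fin n → EuclideanSpace ℝ (Fin n) → ℝ := fun i x => v x i with hg
  have hg_diff : ∀ i, ContDiff ℝ 1 (g i) := fun i =>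
    ((EuclideanSpace.proj (𝕜 := ℝ) i).contDiff.comp hv : )
  have hg_supp : ∀ i, HasCompactSupport (g i) := fun i =>
    hv_supp.comp_left (g := fun z : EuclideanSpace ℝ (Fin n) => z i) rfl
  have hg_ts : ∀ i, tsupport (g i) ⊆ ball (0 : EuclideanSpace ℝ (Fin n)) R := by
    intro i
    refine (closure_mono ?_).trans hRsub
    intro x hx
    simp only [Function.mem_support] at hx ⊢
    exact fun h => hx (by simp [hg, h])
  have hgf : ∀ i x w, fderiv ℝ (g i) x w = fderiv ℝ v x w i := by
    intro i x w
    have : HasFDerivAt (g i) ((EuclideanSpace.proj (𝕜 := ℝ) i).comp (fderiv ℝ v x)) x :=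
      (((EuclideanSpace.proj (𝕜 := ℝ) i).hasFDerivAt).comp x
        (hv.differentiable one_ne_zero x).hasFDerivAt : )
    rw [this.fderiv]; rfl
  have hcont_fv : Continuous (fun y => fderiv ℝ v y) := hv.continuous_fderiv one_ne_zero
  have hcont_gd : ∀ i, Continuous (fun y => fderiv ℝ (g i) y (EuclideanSpace.single i 1)) := by
    intro i
    simp only [hgf]
    exact ((EuclideanSpace.proj (𝕜 := ℝ) i).continuous.comp
      ((ContinuousLinearMap.apply ℝ (EuclideanSpace ℝ (Fin n))
        (EuclideanSpace.single i 1)).continuous.comp hcont_fv))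
  have key : ∀ i : Fin n,
      ∫ y, fderiv ℝ (g i) y (EuclideanSpace.single i 1) * p y
        = - ∫ y, v y i * fderiv ℝ p y (EuclideanSpace.single i 1) := by
    intro i
    obtain ⟨D, hD⟩ := ContDiff.lipschitzWith_of_hasCompactSupport (hg_supp i) (hg_diff i) one_ne_zero
    have main := LipschitzWith.integral_lineDeriv_mul_eq (μ := volume) hC hD (hg_supp i)
      (EuclideanSpace.single i 1)
    have l1 : ∀ x : EuclideanSpace ℝ (Fin n), lineDeriv ℝ f x (EuclideanSpace.single i 1)
        = fderiv ℝ f x (EuclideanSpace.single i 1) := fun x =>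
      (hf_diff.differentiable one_ne_zero x).lineDeriv_eq_fderiv
    have l2 : ∀ x : EuclideanSpace ℝ (Fin n), lineDeriv ℝ (g i) x (-(EuclideanSpace.single i 1))
        = - fderiv ℝ (g i) x (EuclideanSpace.single i 1) := fun x => by
      rw [((hg_diff i).differentiable one_ne_zero x).lineDeriv_eq_fderiv, map_neg]
    simp only [l1, l2] at main
    have e1 : ∀ x : EuclideanSpace ℝ (Fin n),
        fderiv ℝ f x (EuclideanSpace.single i 1) * g i x
        = v x i * fderiv ℝ p x (EuclideanSpace.single i 1) := by
      intro x
      by_cases hx : g i x = 0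
      · have : v x i = 0 := hx
        simp [this, hx]
      · have hmem : x ∈ ball (0 : EuclideanSpace ℝ (Fin n)) R := hg_ts i (subset_tsupport _ hx)
        rw [hfd x hmem]
        exact mul_comm _ _
    have e2 : ∀ x : EuclideanSpace ℝ (Fin n),
        -fderiv ℝ (g i) x (EuclideanSpace.single i 1) * f x
        = -(fderiv ℝ (g i) x (EuclideanSpace.single i 1) * p x) := by
      intro x
      by_cases hx : fderiv ℝ (g i) x (EuclideanSpace.single i 1) = 0
      · simp [hx]
      · have hne : fderiv ℝ (g i) x ≠ 0 := fun h => hx (by rw [h]; simp)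
        have hmem : x ∈ ball (0 : EuclideanSpace ℝ (Fin n)) R :=
          hg_ts i (support_fderiv_subset ℝ hne)
        rw [hfp x hmem]; ring
    simp only [e1, e2] at main
    rw [main, integral_neg, neg_neg]
  have hcs1 : ∀ i : Fin n,
      HasCompactSupport (fun y => fderiv ℝ (g i) y (EuclideanSpace.single i 1)) := by
    intro i
    apply HasCompactSupport.intro (hg_supp i)
    intro x hx
    have : fderiv ℝ (g i) x = 0 := by
      by_contra h
      exact hx (support_fderiv_subset ℝ h)
    simp [this]
  have int1 : ∀ i : Fin n,
      Integrable (fun y => fderiv ℝ (g i) y (EuclideanSpace.single i 1) * p y) volume := by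
    intro i
    exact ((hcont_gd i).mul hp.continuous).integrable_of_hasCompactSupport ((hcs1 i).mul_right)
  have int2 : ∀ i : Fin n,
      Integrable (fun y => v y i * fderiv ℝ p y (EuclideanSpace.single i 1)) volume := by
    intro i
    apply Continuous.integrable_of_hasCompactSupport
    · exact ((EuclideanSpace.proj (𝕜 := ℝ) i).continuous.comp hv.continuous).mul
        ((ContinuousLinearMap.apply ℝ ℝ (EuclideanSpace.single i 1)).continuous.comp
          (hp.continuous_fderiv one_ne_zero))
    · apply HasCompactSupport.mul_right (hg_supp i)
  have decomp : ∀ x : EuclideanSpace ℝ (Fin n),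
      ∑ i, x i • (EuclideanSpace.single i 1 : EuclideanSpace ℝ (Fin n)) = x := by
    intro x
    have := (EuclideanSpace.basisFun (Fin n) ℝ).sum_repr x
    simpa [EuclideanSpace.basisFun_apply, EuclideanSpace.basisFun_repr] using this
  calc ∫ y, vdiv v y * p y
      = ∫ y, ∑ i, fderiv ℝ (g i) y (EuclideanSpace.single i 1) * p y := by
        congr 1; funext y
        rw [vdiv, Finset.sum_mul]
        exact Finset.sum_congr rfl (fun i _ => by rw [hgf])
    _ = ∑ i, ∫ y, fderiv ℝ (g i) y (EuclideanSpace.single i 1) * p y :=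
        integral_finset_sum _ (fun i _ => int1 i)
    _ = ∑ i, - ∫ y, v y i * fderiv ℝ p y (EuclideanSpace.single i 1) :=
        Finset.sum_congr rfl (fun i _ => key i)
    _ = - ∑ i, ∫ y, v y i * fderiv ℝ p y (EuclideanSpace.single i 1) := by
        rw [Finset.sum_neg_distrib]
    _ = - ∫ y, ∑ i, v y i * fderiv ℝ p y (EuclideanSpace.single i 1) := by
        rw [integral_finset_sum _ (fun i _ => int2 i)]
    _ = - ∫ y, fderiv ℝ p y (v y) := by
        have hpt : ∀ y : EuclideanSpace ℝ (Fin n),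
            ∑ i, v y i * fderiv ℝ p y (EuclideanSpace.single i 1) = fderiv ℝ p y (v y) := by
          intro y
          conv_rhs => rw [← decomp (v y)]
          rw [map_sum]
          exact Finset.sum_congr rfl (fun i _ => by rw [ContinuousLinearMap.map_smul]; rfl)
        simp_rw [hpt]

/-- Expectation of a continuous function of `Y` as a Lebesgue integral against the density. -/
theorem hyv_expectation_eq {Ω : Type*} [MeasureSpace Ω] [IsProbabilityMeasure (ℙ : Measure Ω)]
    {Y : Ω → EuclideanSpace ℝ (Fin n)} (hYm : Measurable Y)
    {p : EuclideanSpace ℝ (Fin n) → ℝ} (hp_pos : ∀ y, 0 ≤ p y) (hpc : Continuous p)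
    (hY : Measure.map Y ℙ = volume.withDensity (fun y => ENNReal.ofReal (p y)))
    {f : EuclideanSpace ℝ (Fin n) → ℝ} (hf : Continuous f) :
    ∫ ω, f (Y ω) ∂ℙ = ∫ y, f y * p y := by
  rw [← integral_map hYm.aemeasurable hf.aestronglyMeasurable, hY]
  have h0 : (fun y : EuclideanSpace ℝ (Fin n) => ENNReal.ofReal (p y))
      = fun y => ((p y).toNNReal : ℝ≥0∞) := rfl
  rw [h0, integral_withDensity_eq_integral_smul (hpc.measurable.real_toNNReal)]
  congr 1; funext y
  simp [NNReal.smul_def, Real.coe_toNNReal _ (hp_pos y), mul_comm]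

end Aux

/-- **Hyvärinen's implicit score matching decomposition.**
Let `Y` have a continuously differentiable strictly positive density `p` with finite Fisher
information `J(p)`, and let `v` be a `C¹` compactly supported vector field. Then
`E[div v(Y) + ½‖v(Y)‖²] = ½·E‖v(Y) − ∇log p(Y)‖² − ½·J(p)`; in particular this quantity is
at least `−½·J(p)`. -/
theorem hyvarinen_ism_decomposition
    {n : ℕ}
    {Ω : Type*} [MeasureSpace Ω] [IsProbabilityMeasure (ℙ : Measure Ω)]
    {Y : Ω → EuclideanSpace ℝ (Fin n)} (hYm : Measurable Y)
    (p : EuclideanSpace ℝ (Fin n) → ℝ)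
    (hp_pos : ∀ y, 0 < p y) (hp_diff : ContDiff ℝ 1 p)
    (hY : Measure.map Y ℙ = volume.withDensity (fun y => ENNReal.ofReal (p y)))
    (hJ : Integrable (fun y => ‖gradient p y‖ ^ 2 / p y) volume)
    (v : EuclideanSpace ℝ (Fin n) → EuclideanSpace ℝ (Fin n))
    (hv : ContDiff ℝ 1 v) (hv_supp : HasCompactSupport v) :
    (∫ ω, (vdiv v (Y ω) + (1 / 2) * ‖v (Y ω)‖ ^ 2) ∂ℙ
      = (1 / 2) * ∫ ω, ‖v (Y ω) - gradient (fun y => Real.log (p y)) (Y ω)‖ ^ 2 ∂ℙ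
        - (1 / 2) * fisherInfo p) ∧
    (-(1 / 2) * fisherInfo p ≤ ∫ ω, (vdiv v (Y ω) + (1 / 2) * ‖v (Y ω)‖ ^ 2) ∂ℙ) := by
  have hpc : Continuous p := hp_diff.continuous
  have hgrad_log : ∀ y, gradient (fun z => Real.log (p z)) y = (p y)⁻¹ • gradient p y := by
    intro y
    have h1 : HasFDerivAt p (fderiv ℝ p y) y := (hp_diff.differentiable one_ne_zero y).hasFDerivAt
    have h2 : HasDerivAt Real.log (p y)⁻¹ (p y) := Real.hasDerivAt_log (hp_pos y).ne'
    have h3 : HasFDerivAt (fun z => Real.log (p z)) ((p y)⁻¹ • fderiv ℝ p y) y :=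
      h2.comp_hasFDerivAt y h1
    rw [gradient, h3.fderiv, _root_.map_smul, gradient]
  have hcont_grad : Continuous (fun y => gradient p y) :=
    (InnerProductSpace.toDual ℝ _).symm.continuous.comp (hp_diff.continuous_fderiv one_ne_zero)
  have hinner_grad : ∀ y (u : EuclideanSpace ℝ (Fin n)),
      (inner ℝ (gradient p y) u : ℝ) = fderiv ℝ p y u := by
    intro y u
    simp [gradient, InnerProductSpace.toDual_symm_apply]
  -- continuity of vdiv
  have hcont_div : Continuous (fun y => vdiv v y) := by
    apply continuous_finset_sum
    intro i _
    exact (EuclideanSpace.proj (𝕜 := ℝ) i).continuous.comp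
      ((ContinuousLinearMap.apply ℝ (EuclideanSpace ℝ (Fin n))
        (EuclideanSpace.single i 1)).continuous.comp (hv.continuous_fderiv one_ne_zero))
  -- the two integrands of interest, as functions of y
  set f₁ : EuclideanSpace ℝ (Fin n) → ℝ := fun y => vdiv v y + (1 / 2) * ‖v y‖ ^ 2 with hf₁
  set f₂ : EuclideanSpace ℝ (Fin n) → ℝ :=
    fun y => ‖v y - (p y)⁻¹ • gradient p y‖ ^ 2 with hf₂
  have hf₂eq : (fun y => ‖v y - gradient (fun z => Real.log (p z)) y‖ ^ 2) = f₂ := by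
    funext y; rw [hgrad_log y]
  have hcont_f₁ : Continuous f₁ :=
    hcont_div.add (continuous_const.mul ((hv.continuous.norm).pow 2))
  have hcont_f₂ : Continuous f₂ := by
    apply Continuous.pow
    apply Continuous.norm
    exact hv.continuous.sub ((hpc.inv₀ (fun y => (hp_pos y).ne')).smul hcont_grad)
  -- expectations as Lebesgue integrals
  have E1 : ∫ ω, f₁ (Y ω) ∂ℙ = ∫ y, f₁ y * p y :=
    hyv_expectation_eq hYm (fun y => (hp_pos y).le) hpc hY hcont_f₁
  have E2 : ∫ ω, f₂ (Y ω) ∂ℙ = ∫ y, f₂ y * p y :=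
    hyv_expectation_eq hYm (fun y => (hp_pos y).le) hpc hY hcont_f₂
  -- integrability facts
  have hcs_div : HasCompactSupport (fun y => vdiv v y) := by
    apply HasCompactSupport.intro hv_supp
    intro x hx
    have : fderiv ℝ v x = 0 := by
      by_contra h
      exact hx (support_fderiv_subset ℝ h)
    simp [vdiv, this]
  have I_div : Integrable (fun y => vdiv v y * p y) volume :=
    (hcont_div.mul hpc).integrable_of_hasCompactSupport hcs_div.mul_right
  have hcs_v : HasCompactSupport (fun y => ‖v y‖ ^ 2) := by
    apply HasCompactSupport.intro hv_supp
    intro x hx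
    simp [image_eq_zero_of_notMem_tsupport hx]
  have I_nv : Integrable (fun y => ‖v y‖ ^ 2 * p y) volume :=
    (((hv.continuous.norm).pow 2).mul hpc).integrable_of_hasCompactSupport hcs_v.mul_right
  have hcs_inner : HasCompactSupport (fun y => fderiv ℝ p y (v y)) := by
    apply HasCompactSupport.intro hv_supp
    intro x hx
    simp [image_eq_zero_of_notMem_tsupport hx]
  have hcont_inner : Continuous (fun y => fderiv ℝ p y (v y)) := by
    have : Continuous (fun y : EuclideanSpace ℝ (Fin n) => (fderiv ℝ p y, v y)) :=
      (hp_diff.continuous_fderiv one_ne_zero).prodMk hv.continuous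
    exact isBoundedBilinearMap_apply.continuous.comp this
  have I_inner : Integrable (fun y => fderiv ℝ p y (v y)) volume :=
    hcont_inner.integrable_of_hasCompactSupport hcs_inner
  -- pointwise expansion of f₂ * p
  have hpt : ∀ y, f₂ y * p y
      = ‖v y‖ ^ 2 * p y - 2 * fderiv ℝ p y (v y) + ‖gradient p y‖ ^ 2 / p y := by
    intro y
    have hpy : p y ≠ 0 := (hp_pos y).ne'
    have hns : ‖v y - (p y)⁻¹ • gradient p y‖ ^ 2
        = ‖v y‖ ^ 2 - 2 * inner ℝ (v y) ((p y)⁻¹ • gradient p y)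
          + ‖(p y)⁻¹ • gradient p y‖ ^ 2 := norm_sub_sq_real _ _
    have hin : (inner ℝ (v y) ((p y)⁻¹ • gradient p y) : ℝ)
        = (p y)⁻¹ * fderiv ℝ p y (v y) := by
      rw [real_inner_smul_right, real_inner_comm, hinner_grad]
    have hnn : ‖(p y)⁻¹ • gradient p y‖ ^ 2 = ((p y)⁻¹) ^ 2 * ‖gradient p y‖ ^ 2 := by
      rw [norm_smul]
      simp [mul_pow, abs_of_pos (inv_pos.mpr (hp_pos y))]
    rw [hf₂]
    simp only []
    rw [hns, hin, hnn]
    field_simp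
  -- the integral identities
  have ibp := hyv_ibp p hp_diff v hv hv_supp
  have split1 : ∫ y, f₁ y * p y
      = (∫ y, vdiv v y * p y) + (1 / 2) * ∫ y, ‖v y‖ ^ 2 * p y := by
    have : ∀ y, f₁ y * p y = vdiv v y * p y + (1 / 2) * (‖v y‖ ^ 2 * p y) := by
      intro y; rw [hf₁]; ring
    simp_rw [this]
    rw [integral_add I_div (I_nv.const_mul _), integral_const_mul]
  have split2 : ∫ y, f₂ y * p y
      = (∫ y, ‖v y‖ ^ 2 * p y) - 2 * (∫ y, fderiv ℝ p y (v y)) + fisherInfo p := by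
    have ID : Integrable (fun y => ‖v y‖ ^ 2 * p y - 2 * fderiv ℝ p y (v y)) volume :=
      I_nv.sub (I_inner.const_mul 2)
    have ID2 : Integrable (fun y => 2 * fderiv ℝ p y (v y)) volume := I_inner.const_mul 2
    simp_rw [hpt]
    rw [integral_add ID hJ, integral_sub I_nv ID2, integral_const_mul]
    rfl
  have goal1 : ∫ ω, f₁ (Y ω) ∂ℙ
      = (1 / 2) * ∫ ω, f₂ (Y ω) ∂ℙ - (1 / 2) * fisherInfo p := by
    rw [E1, E2, split1, split2, ibp]
    ring
  have hnonneg : 0 ≤ ∫ ω, f₂ (Y ω) ∂ℙ :=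
    integral_nonneg (fun ω => by positivity)
  constructor
  · rw [show (fun ω => vdiv v (Y ω) + (1 / 2) * ‖v (Y ω)‖ ^ 2) = fun ω => f₁ (Y ω) from rfl]
    have : (fun ω => ‖v (Y ω) - gradient (fun y => Real.log (p y)) (Y ω)‖ ^ 2)
        = fun ω => f₂ (Y ω) := by
      funext ω
      rw [hgrad_log (Y ω)]
    rw [this]
    exact goal1
  · rw [show (fun ω => vdiv v (Y ω) + (1 / 2) * ‖v (Y ω)‖ ^ 2) = fun ω => f₁ (Y ω) from rfl]
    rw [goal1]
    nlinarith
end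
end

section
/- Pointwise denoising loss estimates the local intrinsic dimension in the Gaussian linear model: define the optimal denoiser ε*(y) := −σ·∇log p_σ(y) = σ(τ² + σ²)^{-1} P_V y + σ^{-1}(y − P_V y). Then for every fixed point x ∈ V, the pointwise denoising loss L(x, σ) := E_ε‖ε − ε*(x + σε)‖² satisfies L(x, σ) = d·(τ²/(τ² + σ²))² + σ²‖x‖²/(τ² + σ²)², and L(x, σ) → d as σ → 0⁺ (with τ fixed). -/
open MeasureTheory ProbabilityTheory Real Filter
open scoped ENNReal NNReal Topology

noncomputable section

/-- The standard Gaussian measure `N(0, I_n)` on `ℝⁿ`. -/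
def stdGaussian (n : ℕ) : Measure (EuclideanSpace ℝ (Fin n)) :=
  (Measure.pi fun _ : Fin n => gaussianReal 0 1).map
    (MeasurableEquiv.toLp 2 (Fin n → ℝ))

/-- The optimal denoiser of the Gaussian linear model:
`ε*(y) := σ(τ² + σ²)⁻¹ P_V y + σ⁻¹ (y − P_V y)`, which equals `−σ·∇log p_σ(y)` for `p_σ` the
density of `N(0, τ²P_V + σ²Iₙ)`. -/
def epsStar {n : ℕ} (V : Submodule ℝ (EuclideanSpace ℝ (Fin n))) (τ σ : ℝ)
    (y : EuclideanSpace ℝ (Fin n)) : EuclideanSpace ℝ (Fin n) :=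
  (σ / (τ ^ 2 + σ ^ 2)) • (V.orthogonalProjectionOnto y : EuclideanSpace ℝ (Fin n))
    + σ⁻¹ • (y - (V.orthogonalProjectionOnto y : EuclideanSpace ℝ (Fin n)))

/-- The pointwise denoising loss at `x`: `L(x, σ) := E_ε‖ε − ε*(x + σε)‖²`, the expectation
being over `ε ~ N(0, Iₙ)` only. -/
def pointwiseDenoisingLoss {n : ℕ} (V : Submodule ℝ (EuclideanSpace ℝ (Fin n))) (τ : ℝ)
    (x : EuclideanSpace ℝ (Fin n)) (σ : ℝ) : ℝ :=
  ∫ e, ‖e - epsStar V τ σ (x + σ • e)‖ ^ 2 ∂(stdGaussian n)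


lemma gpdf_meas : Measurable fun x => Real.toNNReal (gaussianPDFReal 0 1 x) :=
  measurable_real_toNNReal.comp (measurable_gaussianPDFReal 0 1)

lemma integral_gaussianReal_eq (g : ℝ → ℝ) :
    ∫ x, g x ∂(gaussianReal 0 1) = ∫ x, gaussianPDFReal 0 1 x * g x := by
  rw [gaussianReal_of_var_ne_zero 0 one_ne_zero]
  have h : (gaussianPDF 0 1) = fun x => ((Real.toNNReal (gaussianPDFReal 0 1 x) : ℝ≥0) : ℝ≥0∞) :=
    rfl
  rw [h, integral_withDensity_eq_integral_smul gpdf_meas g]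
  congr 1
  ext x
  simp [NNReal.smul_def, Real.coe_toNNReal _ (gaussianPDFReal_nonneg 0 1 x)]

lemma integrable_gaussianReal_iff (g : ℝ → ℝ) :
    Integrable g (gaussianReal 0 1) ↔
      Integrable (fun x => gaussianPDFReal 0 1 x * g x) volume := by
  rw [gaussianReal_of_var_ne_zero 0 one_ne_zero]
  have h : (gaussianPDF 0 1) = fun x => ((Real.toNNReal (gaussianPDFReal 0 1 x) : ℝ≥0) : ℝ≥0∞) :=
    rfl
  rw [h, integrable_withDensity_iff_integrable_smul gpdf_meas]
  apply integrable_congr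
  filter_upwards with x
  simp [NNReal.smul_def, Real.coe_toNNReal _ (gaussianPDFReal_nonneg 0 1 x)]

lemma gpdf_eq (x : ℝ) : gaussianPDFReal 0 1 x = (√(2*π))⁻¹ * rexp (-(2⁻¹) * x^2) := by
  simp only [gaussianPDFReal, NNReal.coe_one, mul_one, sub_zero]
  congr 1
  ring

lemma integrable_id_g : Integrable (fun x => x) (gaussianReal 0 1) := by
  rw [integrable_gaussianReal_iff]
  refine ((integrable_mul_exp_neg_mul_sq (by norm_num : (0:ℝ) < 2⁻¹)).const_mul
    ((√(2*π))⁻¹)).congr ?_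
  filter_upwards with x
  rw [gpdf_eq]; ring

lemma integrable_sq_g : Integrable (fun x => x^2) (gaussianReal 0 1) := by
  rw [integrable_gaussianReal_iff]
  refine ((integrable_rpow_mul_exp_neg_mul_sq (by norm_num : (0:ℝ) < 2⁻¹)
    (by norm_num : (-1:ℝ) < 2)).const_mul ((√(2*π))⁻¹)).congr ?_
  filter_upwards with x
  rw [gpdf_eq, show (2:ℝ) = ((2:ℕ):ℝ) by norm_num, Real.rpow_natCast]
  ring

lemma moment_one_g : ∫ x, x ∂(gaussianReal 0 1) = 0 := by
  rw [integral_gaussianReal_eq]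
  set f := fun x => gaussianPDFReal 0 1 x * x with hf
  have hodd : ∀ x, f (-x) = -f x := by
    intro x
    simp only [hf, gpdf_eq, neg_sq]
    ring
  have h1 : ∫ x, f (-x) = ∫ x, f x := integral_neg_eq_self f volume
  simp only [hodd, integral_neg] at h1
  linarith

lemma integral_sq_exp_Ioi : ∫ x in Set.Ioi (0:ℝ), x^2 * rexp (-(2⁻¹) * x^2) = √2 * √π / 2 := by
  have h := integral_rpow_mul_exp_neg_mul_rpow (p := 2) (q := 2) (b := 2⁻¹)
    (by norm_num) (by norm_num) (by norm_num)
  have heq : ∀ x ∈ Set.Ioi (0:ℝ), x ^ (2:ℝ) * rexp (-2⁻¹ * x ^ (2:ℝ))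
      = x^2 * rexp (-(2⁻¹) * x^2) := by
    intro x _
    rw [show (2:ℝ) = ((2:ℕ):ℝ) by norm_num, Real.rpow_natCast]
  rw [setIntegral_congr_fun measurableSet_Ioi heq] at h
  rw [h]
  have hG : Real.Gamma ((2+1)/2) = √π / 2 := by
    rw [show ((2:ℝ)+1)/2 = 1/2 + 1 by norm_num, Real.Gamma_add_one (by norm_num),
      Real.Gamma_one_half_eq]
    ring
  have hb : ((2:ℝ)⁻¹) ^ (-(2+1)/2 : ℝ) = 2 * √2 := by
    rw [show (-(2+1)/2 : ℝ) = -(3/2) by norm_num,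
      Real.inv_rpow (by norm_num : (0:ℝ) ≤ 2), Real.rpow_neg (by norm_num : (0:ℝ) ≤ 2),
      inv_inv, show (3/2:ℝ) = 1 + 1/2 by norm_num, Real.rpow_add (by norm_num : (0:ℝ) < 2),
      Real.rpow_one, ← Real.sqrt_eq_rpow]
  rw [hG, hb]
  ring

lemma moment_two_g : ∫ x, x^2 ∂(gaussianReal 0 1) = 1 := by
  rw [integral_gaussianReal_eq]
  have h1 : ∀ x : ℝ, gaussianPDFReal 0 1 x * x^2
      = (√(2*π))⁻¹ * (x^2 * rexp (-(2⁻¹) * x^2)) := by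
    intro x; rw [gpdf_eq]; ring
  simp only [h1]
  rw [integral_const_mul]
  have h2 : ∫ x : ℝ, x^2 * rexp (-(2⁻¹) * x^2) = 2 * ∫ x in Set.Ioi (0:ℝ), x^2 * rexp (-(2⁻¹) * x^2) := by
    rw [← integral_comp_abs (f := fun x => x^2 * rexp (-(2⁻¹) * x^2))]
    congr 1
    ext x
    rw [sq_abs]
  rw [h2, integral_sq_exp_Ioi]
  rw [show (2:ℝ) * π = 2 * π from rfl]
  rw [Real.sqrt_mul (by norm_num : (0:ℝ) ≤ 2)]
  have hpos : √2 * √π > 0 := by positivity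
  field_simp

section Pi
variable {n : ℕ}

lemma pi_integrable_eval (i : Fin n) :
    Integrable (fun a : Fin n → ℝ => a i) (Measure.pi fun _ => gaussianReal 0 1) := by
  letI : MeasureSpace ℝ := ⟨gaussianReal 0 1⟩
  haveI : IsProbabilityMeasure (volume : Measure ℝ) :=
    (inferInstance : IsProbabilityMeasure (gaussianReal 0 1))
  have h : ∀ k : Fin n, Integrable (fun t : ℝ => if k = i then t else (1:ℝ)) volume := by
    intro k
    by_cases hk : k = i
    · subst hk
      simp only [eq_self_iff_true, if_true]
      exact integrable_id_g
    · simp only [if_neg hk]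
      exact integrable_const 1
  have hp := MeasureTheory.Integrable.fintype_prod
    (f := fun k (t : ℝ) => if k = i then t else (1:ℝ)) h
  refine hp.congr ?_
  filter_upwards with a
  simp [Finset.prod_ite_eq']

lemma pi_integral_eval (i : Fin n) :
    ∫ a, a i ∂(Measure.pi fun _ : Fin n => gaussianReal 0 1) = 0 := by
  letI : MeasureSpace ℝ := ⟨gaussianReal 0 1⟩
  haveI : IsProbabilityMeasure (volume : Measure ℝ) :=
    (inferInstance : IsProbabilityMeasure (gaussianReal 0 1))
  have h : (fun a : Fin n → ℝ => a i)
      = fun a => ∏ k, if k = i then a k else (1:ℝ) := by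
    funext a
    simp [Finset.prod_ite_eq']
  rw [h]
  refine Eq.trans (MeasureTheory.integral_fintype_prod_eq_prod (ι := Fin n)
    (f := fun k (t : ℝ) => if k = i then t else (1:ℝ))) ?_
  refine Finset.prod_eq_zero (Finset.mem_univ i) ?_
  simp only [eq_self_iff_true, if_true]
  exact moment_one_g

lemma pi_integrable_eval_mul (i j : Fin n) :
    Integrable (fun a : Fin n → ℝ => a i * a j) (Measure.pi fun _ => gaussianReal 0 1) := by
  letI : MeasureSpace ℝ := ⟨gaussianReal 0 1⟩
  haveI : IsProbabilityMeasure (volume : Measure ℝ) :=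
    (inferInstance : IsProbabilityMeasure (gaussianReal 0 1))
  have hmul : (fun t : ℝ => t * t) = fun t => t ^ 2 := by funext t; ring
  have h : ∀ k : Fin n, Integrable
      (fun t : ℝ => (if k = i then t else (1:ℝ)) * (if k = j then t else (1:ℝ))) volume := by
    intro k
    by_cases hki : k = i
    · subst hki
      by_cases hkj : k = j
      · subst hkj
        simp only [eq_self_iff_true, if_true]
        rw [hmul]
        exact integrable_sq_g
      · simp only [if_pos rfl, if_neg hkj, mul_one]
        exact integrable_id_g
    · by_cases hkj : k = j
      · subst hkj
        simp only [if_pos rfl, if_neg hki, one_mul]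
        exact integrable_id_g
      · simp only [if_neg hki, if_neg hkj, mul_one]
        exact integrable_const 1
  have hp := MeasureTheory.Integrable.fintype_prod
    (f := fun k (t : ℝ) => (if k = i then t else (1:ℝ)) * (if k = j then t else (1:ℝ))) h
  refine hp.congr ?_
  filter_upwards with a
  rw [Finset.prod_mul_distrib]
  simp [Finset.prod_ite_eq']

lemma pi_integral_eval_mul (i j : Fin n) :
    ∫ a, a i * a j ∂(Measure.pi fun _ : Fin n => gaussianReal 0 1)
      = if i = j then 1 else 0 := by
  letI : MeasureSpace ℝ := ⟨gaussianReal 0 1⟩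
  haveI : IsProbabilityMeasure (volume : Measure ℝ) :=
    (inferInstance : IsProbabilityMeasure (gaussianReal 0 1))
  have hmul : (fun t : ℝ => t * t) = fun t => t ^ 2 := by funext t; ring
  have h : (fun a : Fin n → ℝ => a i * a j)
      = fun a => ∏ k, ((if k = i then a k else (1:ℝ)) * (if k = j then a k else (1:ℝ))) := by
    funext a
    rw [Finset.prod_mul_distrib]
    simp [Finset.prod_ite_eq']
  rw [h]
  refine Eq.trans (MeasureTheory.integral_fintype_prod_eq_prod (ι := Fin n)
    (f := fun k (t : ℝ) => (if k = i then t else (1:ℝ)) * (if k = j then t else (1:ℝ)))) ?_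
  by_cases hij : i = j
  · subst hij
    rw [if_pos rfl]
    refine Finset.prod_eq_one fun k _ => ?_
    by_cases hk : k = i
    · subst hk
      simp only [eq_self_iff_true, if_true]
      rw [hmul]
      exact moment_two_g
    · simp only [if_neg hk, mul_one]
      simpa using (integral_const (μ := (volume : Measure ℝ)) (1:ℝ))
  · rw [if_neg hij]
    refine Finset.prod_eq_zero (Finset.mem_univ i) ?_
    simp only [if_pos rfl, if_neg hij, mul_one]
    exact moment_one_g

end Pi

section Std
variable {n : ℕ}

local notation "E" n => EuclideanSpace ℝ (Fin n)

lemma stdGaussian_eq : stdGaussian n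
    = (Measure.pi fun _ : Fin n => gaussianReal 0 1).map
      (MeasurableEquiv.toLp 2 (Fin n → ℝ)) := rfl

instance : IsProbabilityMeasure (stdGaussian n) := by
  rw [stdGaussian_eq]
  exact Measure.isProbabilityMeasure_map
    (MeasurableEquiv.toLp 2 (Fin n → ℝ)).measurable.aemeasurable

lemma symm_apply_inner (a : Fin n → ℝ) (v : EuclideanSpace ℝ (Fin n)) :
    (inner ℝ ((MeasurableEquiv.toLp 2 (Fin n → ℝ)) a) v : ℝ) = ∑ i, a i * v i := by
  simp [PiLp.inner_apply, RCLike.inner_apply]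
  exact Finset.sum_congr rfl fun i _ => mul_comm _ _

lemma integrable_inner_std (v : EuclideanSpace ℝ (Fin n)) :
    Integrable (fun e : EuclideanSpace ℝ (Fin n) => (inner ℝ e v : ℝ)) (stdGaussian n) := by
  rw [stdGaussian_eq, integrable_map_equiv]
  have : ∀ a : Fin n → ℝ,
      ((fun e : EuclideanSpace ℝ (Fin n) => (inner ℝ e v : ℝ)) ∘
        (MeasurableEquiv.toLp 2 (Fin n → ℝ))) a = ∑ i, a i * v i := by
    intro a; exact symm_apply_inner a v
  rw [funext this]
  exact integrable_finset_sum _ fun i _ => (pi_integrable_eval i).mul_const (v i)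

lemma integral_inner_std (v : EuclideanSpace ℝ (Fin n)) :
    ∫ e, (inner ℝ e v : ℝ) ∂(stdGaussian n) = 0 := by
  rw [stdGaussian_eq, integral_map_equiv]
  have : ∀ a : Fin n → ℝ,
      (inner ℝ ((MeasurableEquiv.toLp 2 (Fin n → ℝ)) a) v : ℝ) = ∑ i, a i * v i :=
    fun a => symm_apply_inner a v
  simp_rw [this]
  rw [integral_finset_sum _ fun i _ => (pi_integrable_eval i).mul_const (v i)]
  refine Finset.sum_eq_zero fun i _ => ?_
  rw [integral_mul_const, pi_integral_eval, zero_mul]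

lemma integrable_inner_mul_std (v w : EuclideanSpace ℝ (Fin n)) :
    Integrable (fun e : EuclideanSpace ℝ (Fin n) => (inner ℝ e v : ℝ) * (inner ℝ e w : ℝ))
      (stdGaussian n) := by
  rw [stdGaussian_eq, integrable_map_equiv]
  have : ∀ a : Fin n → ℝ,
      ((fun e : EuclideanSpace ℝ (Fin n) => (inner ℝ e v : ℝ) * (inner ℝ e w : ℝ)) ∘
        (MeasurableEquiv.toLp 2 (Fin n → ℝ))) a
      = ∑ i, ∑ j, (v i * w j) * (a i * a j) := by
    intro a
    have h1 := symm_apply_inner a v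
    have h2 := symm_apply_inner a w
    simp only [Function.comp_apply, h1, h2, Finset.sum_mul_sum]
    refine Finset.sum_congr rfl fun i _ => Finset.sum_congr rfl fun j _ => by ring
  rw [funext this]
  exact integrable_finset_sum _ fun i _ => integrable_finset_sum _ fun j _ =>
    (pi_integrable_eval_mul i j).const_mul _

lemma integral_inner_mul_std {n : ℕ} (v w : EuclideanSpace ℝ (Fin n)) :
    ∫ e, (inner ℝ e v : ℝ) * (inner ℝ e w : ℝ) ∂(stdGaussian n) = (inner ℝ v w : ℝ) := by
  rw [stdGaussian_eq, integral_map_equiv]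
  have h : ∀ a : Fin n → ℝ,
      (inner ℝ ((MeasurableEquiv.toLp 2 (Fin n → ℝ)) a) v : ℝ)
        * (inner ℝ ((MeasurableEquiv.toLp 2 (Fin n → ℝ)) a) w : ℝ)
      = ∑ i, ∑ j, (v i * w j) * (a i * a j) := by
    intro a
    rw [symm_apply_inner a v, symm_apply_inner a w, Finset.sum_mul_sum]
    refine Finset.sum_congr rfl fun i _ => Finset.sum_congr rfl fun j _ => by ring
  simp_rw [h]
  rw [integral_finset_sum _ fun i _ => integrable_finset_sum _ fun j _ =>
    (pi_integrable_eval_mul i j).const_mul _]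
  have : ∀ i : Fin n, ∫ a, ∑ j, (v i * w j) * (a i * a j)
      ∂(Measure.pi fun _ : Fin n => gaussianReal 0 1) = v i * w i := by
    intro i
    rw [integral_finset_sum _ fun j _ => (pi_integrable_eval_mul i j).const_mul _]
    have hj : ∀ j : Fin n, ∫ a, (v i * w j) * (a i * a j)
        ∂(Measure.pi fun _ : Fin n => gaussianReal 0 1)
        = if i = j then v i * w i else 0 := by
      intro j
      rw [integral_const_mul, pi_integral_eval_mul]
      by_cases hij : i = j
      · subst hij; simp
      · simp [hij]
    simp_rw [hj]
    simp
  simp_rw [this]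
  simp [PiLp.inner_apply, RCLike.inner_apply]
  exact Finset.sum_congr rfl fun i _ => mul_comm _ _

end Std

section Proj
variable {n : ℕ} (V : Submodule ℝ (EuclideanSpace ℝ (Fin n)))

lemma proj_norm_sq_eq_sum (e : EuclideanSpace ℝ (Fin n)) :
    ‖(V.orthogonalProjectionOnto e : EuclideanSpace ℝ (Fin n))‖ ^ 2
      = ∑ i, (inner ℝ e ((stdOrthonormalBasis ℝ V i : EuclideanSpace ℝ (Fin n))) : ℝ)
          * (inner ℝ e ((stdOrthonormalBasis ℝ V i : EuclideanSpace ℝ (Fin n))) : ℝ) := by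
  set b := stdOrthonormalBasis ℝ V
  rw [← real_inner_self_eq_norm_sq]
  rw [← Submodule.starProjection_apply, V.inner_starProjection_left_eq_right,
    Submodule.starProjection_apply, Submodule.starProjection_apply,
    Submodule.orthogonalProjectionOnto_mem_subspace_eq_self]
  have hsum : ((V.orthogonalProjectionOnto e : V) : EuclideanSpace ℝ (Fin n))
      = ∑ i, (inner ℝ ((b i : EuclideanSpace ℝ (Fin n))) e : ℝ)
          • ((b i : EuclideanSpace ℝ (Fin n))) := by
    rw [b.orthogonalProjectionOnto_apply_eq_sum]
    push_cast
    rfl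
  rw [hsum, inner_sum]
  refine Finset.sum_congr rfl fun i _ => ?_
  rw [real_inner_smul_right]
  rw [real_inner_comm ((b i : EuclideanSpace ℝ (Fin n))) e]

lemma integrable_proj_norm_sq :
    Integrable (fun e : EuclideanSpace ℝ (Fin n) =>
      ‖(V.orthogonalProjectionOnto e : EuclideanSpace ℝ (Fin n))‖ ^ 2) (stdGaussian n) := by
  have h := funext (proj_norm_sq_eq_sum V)
  rw [h]
  exact integrable_finset_sum _ fun i _ => integrable_inner_mul_std _ _

lemma integral_proj_norm_sq :
    ∫ e, ‖(V.orthogonalProjectionOnto e : EuclideanSpace ℝ (Fin n))‖ ^ 2 ∂(stdGaussian n)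
      = (Module.finrank ℝ V : ℝ) := by
  simp_rw [proj_norm_sq_eq_sum V]
  rw [integral_finset_sum _ fun i _ => integrable_inner_mul_std _ _]
  have : ∀ i, ∫ e, (inner ℝ e ((stdOrthonormalBasis ℝ V i : EuclideanSpace ℝ (Fin n))) : ℝ)
      * (inner ℝ e ((stdOrthonormalBasis ℝ V i : EuclideanSpace ℝ (Fin n))) : ℝ)
      ∂(stdGaussian n) = 1 := by
    intro i
    rw [integral_inner_mul_std]
    rw [real_inner_self_eq_norm_sq]
    have hnorm : ‖((stdOrthonormalBasis ℝ V i : EuclideanSpace ℝ (Fin n)))‖ = 1 := by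
      rw [Submodule.norm_coe]
      exact (stdOrthonormalBasis ℝ V).orthonormal.1 i
    rw [hnorm]; norm_num
  simp_rw [this]
  simp

end Proj

lemma loss_formula {n : ℕ} (V : Submodule ℝ (EuclideanSpace ℝ (Fin n)))
    {τ σ : ℝ} (hτ : 0 < τ) (hσ : 0 < σ)
    (x : EuclideanSpace ℝ (Fin n)) (hx : x ∈ V) :
    pointwiseDenoisingLoss V τ x σ
      = (Module.finrank ℝ V : ℝ) * (τ ^ 2 / (τ ^ 2 + σ ^ 2)) ^ 2
        + σ ^ 2 * ‖x‖ ^ 2 / (τ ^ 2 + σ ^ 2) ^ 2 := by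
  have hts : (0:ℝ) < τ ^ 2 + σ ^ 2 := by positivity
  set c : ℝ := τ ^ 2 / (τ ^ 2 + σ ^ 2) with hc
  set bb : ℝ := σ / (τ ^ 2 + σ ^ 2) with hbb
  have hPx : ((V.orthogonalProjectionOnto x : EuclideanSpace ℝ (Fin n))) = x :=
    Submodule.starProjection_eq_self_iff.mpr hx
  have hkey : ∀ e : EuclideanSpace ℝ (Fin n),
      e - epsStar V τ σ (x + σ • e)
        = c • (V.orthogonalProjectionOnto e : EuclideanSpace ℝ (Fin n)) - bb • x := by
    intro e
    simp only [epsStar, map_add, _root_.map_smul, Submodule.coe_add, Submodule.coe_smul, hPx, hc, hbb]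
    match_scalars <;> field_simp <;> ring
  have hpoint : ∀ e : EuclideanSpace ℝ (Fin n),
      ‖e - epsStar V τ σ (x + σ • e)‖ ^ 2
        = c ^ 2 * ‖(V.orthogonalProjectionOnto e : EuclideanSpace ℝ (Fin n))‖ ^ 2
            - (2 * (c * bb)) * (inner ℝ e x : ℝ) + bb ^ 2 * ‖x‖ ^ 2 := by
    intro e
    rw [hkey e, norm_sub_sq_real, real_inner_smul_left, real_inner_smul_right,
      norm_smul, norm_smul]
    have h1 : (inner ℝ (V.orthogonalProjectionOnto e : EuclideanSpace ℝ (Fin n)) x : ℝ)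
        = (inner ℝ e x : ℝ) := by
      rw [← Submodule.starProjection_apply, Submodule.inner_starProjection_left_eq_right,
          Submodule.starProjection_apply, hPx]
    rw [h1, Real.norm_eq_abs, Real.norm_eq_abs, abs_of_nonneg (by positivity : (0:ℝ) ≤ c),
      abs_of_nonneg (by positivity : (0:ℝ) ≤ bb)]
    ring
  rw [pointwiseDenoisingLoss]
  simp_rw [hpoint]
  have I1 := (integrable_proj_norm_sq (n := n) V).const_mul (c ^ 2)
  have I2 := (integrable_inner_std (n := n) x).const_mul (2 * (c * bb))
  have I12 : Integrable (fun e : EuclideanSpace ℝ (Fin n) =>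
      c ^ 2 * ‖(V.orthogonalProjectionOnto e : EuclideanSpace ℝ (Fin n))‖ ^ 2
        - (2 * (c * bb)) * (inner ℝ e x : ℝ)) (stdGaussian n) := I1.sub I2
  rw [integral_add I12 (integrable_const _), integral_sub I1 I2,
    integral_const_mul, integral_const_mul, integral_const, integral_proj_norm_sq,
    integral_inner_std]
  simp only [measure_univ, probReal_univ, ENNReal.toReal_one, one_smul, mul_zero, sub_zero]
  rw [hc, hbb]
  field_simp

/-- **Pointwise denoising loss estimates the LID in the Gaussian linear model.**
For every `x ∈ V`, `L(x, σ) = d·(τ²/(τ² + σ²))² + σ²‖x‖²/(τ² + σ²)²`, and `L(x, σ) → d` as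
`σ → 0⁺` (with `τ` fixed). -/
theorem pointwise_denoising_loss_estimates_lid
    {n d : ℕ} (hd : 0 < d) (hdn : d ≤ n)
    (V : Submodule ℝ (EuclideanSpace ℝ (Fin n))) (hV : Module.finrank ℝ V = d)
    {τ σ : ℝ} (hτ : 0 < τ) (hσ : 0 < σ)
    (x : EuclideanSpace ℝ (Fin n)) (hx : x ∈ V) :
    (pointwiseDenoisingLoss V τ x σ
      = d * (τ ^ 2 / (τ ^ 2 + σ ^ 2)) ^ 2 + σ ^ 2 * ‖x‖ ^ 2 / (τ ^ 2 + σ ^ 2) ^ 2) ∧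
    Tendsto (fun s : ℝ => pointwiseDenoisingLoss V τ x s) (𝓝[>] 0) (𝓝 (d : ℝ)) := by
  constructor
  · rw [loss_formula V hτ hσ x hx, hV]
  · have hev : (fun s : ℝ => (d:ℝ) * (τ^2/(τ^2+s^2))^2 + s^2*‖x‖^2/(τ^2+s^2)^2)
        =ᶠ[𝓝[>] (0:ℝ)] (fun s : ℝ => pointwiseDenoisingLoss V τ x s) := by
      filter_upwards [self_mem_nhdsWithin] with s hs
      rw [loss_formula V hτ hs x hx, hV]
    have hne : (τ^2 : ℝ) ≠ 0 := by positivity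
    have hden : Tendsto (fun s : ℝ => τ^2 + s^2) (𝓝 0) (𝓝 (τ^2)) := by
      have h2 : Tendsto (fun s : ℝ => s^2) (𝓝 (0:ℝ)) (𝓝 (0:ℝ)) := by
        simpa using (continuous_pow 2).tendsto (0:ℝ)
      simpa using tendsto_const_nhds.add h2
    have h1 : Tendsto (fun s : ℝ => τ^2/(τ^2+s^2)) (𝓝 0) (𝓝 1) := by
      have := Filter.Tendsto.div (tendsto_const_nhds (x := (τ^2:ℝ))) hden hne
      simpa [div_self hne, Pi.div_def] using this
    have h2 : Tendsto (fun s : ℝ => s^2*‖x‖^2/(τ^2+s^2)^2) (𝓝 0) (𝓝 0) := by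
      have hnum : Tendsto (fun s : ℝ => s^2*‖x‖^2) (𝓝 (0:ℝ)) (𝓝 (0:ℝ)) := by
        have := ((continuous_pow 2).tendsto (0:ℝ)).mul_const (‖x‖^2)
        simpa using this
      have := hnum.div (hden.pow 2) (pow_ne_zero 2 hne)
      simpa [Pi.div_def] using this
    have hF : Tendsto (fun s : ℝ => (d:ℝ) * (τ^2/(τ^2+s^2))^2 + s^2*‖x‖^2/(τ^2+s^2)^2)
        (𝓝 0) (𝓝 ((d:ℝ))) := by
      have := ((tendsto_const_nhds (x := (d:ℝ))).mul (h1.pow 2)).add h2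
      simpa using this
    exact (hF.mono_left nhdsWithin_le_nhds).congr' hev
end
end

section
/- Error bundle rank bound in the Gaussian linear model: define the optimal denoiser ε*(y) := σ(τ² + σ²)^{-1} P_V y + σ^{-1}(y − P_V y). Then for every x ∈ V and every e ∈ ℝⁿ, the error vector e − ε*(x + σe) lies in V. Consequently, for any finite collection e₁, …, e_m ∈ ℝⁿ, the m×n matrix B whose i-th row is (eᵢ − ε*(x + σeᵢ))ᵀ has rank at most d, and the Gram matrix BᵀB has at most d nonzero eigenvalues. -/
open MeasureTheory ProbabilityTheory Real Filter Matrix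
open scoped ENNReal NNReal Topology

noncomputable section

/-- The `m × n` error matrix whose `i`-th row is `(eᵢ − ε*(x + σeᵢ))ᵀ`. -/
def errMatrix {n : ℕ} (V : Submodule ℝ (EuclideanSpace ℝ (Fin n))) (τ σ : ℝ)
    (x : EuclideanSpace ℝ (Fin n)) {m : ℕ} (e : Fin m → EuclideanSpace ℝ (Fin n)) :
    Matrix (Fin m) (Fin n) ℝ :=
  Matrix.of fun i j => (e i - epsStar V τ σ (x + σ • e i)) j

/-- **Error bundle rank bound in the Gaussian linear model.**
For every `x ∈ V` and every `e ∈ ℝⁿ`, the error vector `e − ε*(x + σe)` lies in `V`;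
consequently, for any `e₁, …, e_m ∈ ℝⁿ`, the matrix `B` whose rows are the error vectors has
rank at most `d`, and the Gram matrix `BᵀB` has at most `d` nonzero eigenvalues. -/
theorem error_bundle_rank_bound
    {n d : ℕ} (hd : 0 < d) (hdn : d ≤ n)
    (V : Submodule ℝ (EuclideanSpace ℝ (Fin n))) (hV : Module.finrank ℝ V = d)
    {τ σ : ℝ} (hτ : 0 < τ) (hσ : 0 < σ)
    (x : EuclideanSpace ℝ (Fin n)) (hx : x ∈ V) :
    (∀ e : EuclideanSpace ℝ (Fin n), e - epsStar V τ σ (x + σ • e) ∈ V) ∧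
    (∀ (m : ℕ) (e : Fin m → EuclideanSpace ℝ (Fin n)),
      (errMatrix V τ σ x e).rank ≤ d ∧
      ∀ h : ((errMatrix V τ σ x e)ᵀ * errMatrix V τ σ x e).IsHermitian,
        (Finset.univ.filter fun i : Fin n => h.eigenvalues i ≠ 0).card ≤ d) := by
  have hmem : ∀ e : EuclideanSpace ℝ (Fin n), e - epsStar V τ σ (x + σ • e) ∈ V := by
    intro e
    set q : EuclideanSpace ℝ (Fin n) :=
      (V.orthogonalProjectionOnto (x + σ • e) : EuclideanSpace ℝ (Fin n)) with hq
    have hqV : q ∈ V := (V.orthogonalProjectionOnto (x + σ • e)).2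
    have hexp : e - epsStar V τ σ (x + σ • e)
        = (σ⁻¹ - σ / (τ ^ 2 + σ ^ 2)) • q - σ⁻¹ • x := by
      unfold epsStar
      rw [← hq]
      rw [smul_sub, smul_add, smul_smul, inv_mul_cancel₀ hσ.ne', one_smul, sub_smul]
      abel
    rw [hexp]
    exact sub_mem (V.smul_mem _ hqV) (V.smul_mem _ hx)
  refine ⟨hmem, fun m e => ?_⟩
  -- the submodule of plain functions corresponding to V
  let f := (WithLp.linearEquiv 2 ℝ (Fin n → ℝ))
  let V' : Submodule ℝ (Fin n → ℝ) := V.map f.toLinearMap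
  have hV' : Module.finrank ℝ V' = d := by
    rw [LinearEquiv.finrank_map_eq]; exact hV
  have hrank : (errMatrix V τ σ x e).rank ≤ d := by
    have h1 : (errMatrix V τ σ x e).rank = (errMatrix V τ σ x e)ᵀ.rank :=
      (Matrix.rank_transpose _).symm
    rw [h1, Matrix.rank, Matrix.range_mulVecLin, Matrix.col, Matrix.transpose_transpose]
    have hspan : Submodule.span ℝ (Set.range (errMatrix V τ σ x e)) ≤ V' := by
      rw [Submodule.span_le]
      rintro _ ⟨i, rfl⟩
      exact ⟨e i - epsStar V τ σ (x + σ • e i), hmem (e i), rfl⟩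
    calc Module.finrank ℝ (Submodule.span ℝ (Set.range (errMatrix V τ σ x e)))
        ≤ Module.finrank ℝ V' := Submodule.finrank_mono hspan
      _ = d := hV'
  refine ⟨hrank, fun h => ?_⟩
  have := h.rank_eq_card_non_zero_eigs
  rw [Matrix.rank_transpose_mul_self] at this
  have hcard : (Finset.univ.filter fun i : Fin n => h.eigenvalues i ≠ 0).card
      = Fintype.card {i // h.eigenvalues i ≠ 0} := (Fintype.card_subtype _).symm
  rw [hcard, ← this]
  exact hrank
end
end
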